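/- Pieri rule at the level of crystals/tableaux: for a partition λ with at most r parts and l ∈ ℕ, the map sending a pair (T, A) with T ∈ SSYT_r(λ) and A ∈ ℕ^r with Σ A_i = l to the tableau obtained by row-inserting into T the entry 1 exactly A_1 times, then 2 exactly A_2 times, ..., then r exactly A_r times, is a bijection onto ⊔_μ SSYT_r(μ), where μ ranges over partitions obtained from λ by adding l boxes with no two in the same column. -/

import Mathlib

namespace RSKPaper

/-- The shape of a tableau: its list of row lengths. -/
def shape (T : List (List ℕ)) : List ℕ := T.map List.length

/-- All entries of the tableau lie in `{1, ..., m}`. -/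
def EntriesIn (T : List (List ℕ)) (m : ℕ) : Prop :=
  ∀ row ∈ T, ∀ x ∈ row, 1 ≤ x ∧ x ≤ m

/-- `T` is a semistandard Young tableau: rows are nonempty and weakly increasing,
row lengths are weakly decreasing, and columns are strictly increasing. -/
def IsSSYT (T : List (List ℕ)) : Prop :=
  (∀ row ∈ T, row ≠ [] ∧ row.Pairwise (· ≤ ·)) ∧
  (∀ i, i + 1 < T.length →
    (T.getD (i+1) []).length ≤ (T.getD i []).length ∧
    ∀ k < (T.getD (i+1) []).length, (T.getD i []).getD k 0 < (T.getD (i+1) []).getD k 0)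

/-- Schensted row insertion of `x` into a single row: returns the new row and
the bumped entry, if any. -/
def insRow (x : ℕ) : List ℕ → List ℕ × Option ℕ
  | [] => ([x], none)
  | a :: as =>
      if a ≤ x then
        let p := insRow x as
        (a :: p.1, p.2)
      else (x :: as, some a)

/-- Schensted insertion of an entry into a tableau. -/
def insertT : List (List ℕ) → ℕ → List (List ℕ)
  | [], x => [[x]]
  | r :: rs, x =>
      match insRow x r with
      | (r', none) => r' :: rs
      | (r', some b) => r' :: insertT rs b

/-- Simultaneous insertion into the insertion tableau `P` and recording of the
label `lbl` at the new box of the recording tableau `Q`. -/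
def insPQ : List (List ℕ) → List (List ℕ) → ℕ → ℕ → List (List ℕ) × List (List ℕ)
  | [], _, x, lbl => ([[x]], [[lbl]])
  | r :: rs, qs, x, lbl =>
      match insRow x r with
      | (r', none) => (r' :: rs, (qs.headD [] ++ [lbl]) :: qs.tail)
      | (r', some b) =>
          let p := insPQ rs qs.tail b lbl
          (r' :: p.1, qs.headD [] :: p.2)

/-- One RSK step: insert the second coordinate, record the first. -/
def RSstep (PQ : List (List ℕ) × List (List ℕ)) (p : ℕ × ℕ) :
    List (List ℕ) × List (List ℕ) :=
  insPQ PQ.1 PQ.2 p.2 p.1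

/-- The two-line array of a matrix: the pair `(i, j)` (1-based) appears with
multiplicity `A i j`, listed in lexicographic order. -/
def biword {r n : ℕ} (A : Matrix (Fin r) (Fin n) ℕ) : List (ℕ × ℕ) :=
  (List.finRange r).flatMap fun i =>
    (List.finRange n).flatMap fun j =>
      List.replicate (A i j) (i.val + 1, j.val + 1)

/-- The Robinson–Schensted–Knuth correspondence: `RSK A = (P A, Q A)`. -/
def RSK {r n : ℕ} (A : Matrix (Fin r) (Fin n) ℕ) :
    List (List ℕ) × List (List ℕ) :=
  (biword A).foldl RSstep ([], [])

/-- The Robinson–Schensted correspondence on permutations: row-insert the word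
`w 1, ..., w n`, recording positions. -/
def RS {n : ℕ} (w : Equiv.Perm (Fin n)) : List (List ℕ) × List (List ℕ) :=
  ((List.finRange n).map (fun k => (k.val + 1, (w k).val + 1))).foldl RSstep ([], [])

/-- The target of RSK: pairs of semistandard tableaux of the same shape, with
entries of the first in `{1,...,n}` and of the second in `{1,...,r}`. -/
def RSKTarget (r n : ℕ) : Set (List (List ℕ) × List (List ℕ)) :=
  {pq | IsSSYT pq.1 ∧ IsSSYT pq.2 ∧ shape pq.1 = shape pq.2 ∧
    EntriesIn pq.1 n ∧ EntriesIn pq.2 r}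

/-! Crystal operators via the signature (bracketing) rule. -/

/-- One step of bracket matching: `true` is an unmatched plus pushed on the stack,
`false` is a minus which cancels the most recent unmatched plus if one exists. -/
def sigStep (st : List ℕ × List ℕ) (p : ℕ × Bool) : List ℕ × List ℕ :=
  if p.2 then (p.1 :: st.1, st.2)
  else
    match st.1 with
    | [] => ([], st.2 ++ [p.1])
    | _ :: ps => (ps, st.2)

/-- Bracket matching: returns (unmatched pluses, newest first; unmatched minuses, oldest first). -/
def matchSig (l : List (ℕ × Bool)) : List ℕ × List ℕ := l.foldl sigStep ([], [])

/-- Position acted upon by the lowering operator `f`. -/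
def fIdx (l : List (ℕ × Bool)) : Option ℕ := (matchSig l).1.head?

/-- Position acted upon by the raising operator `e`. -/
def eIdx (l : List (ℕ × Bool)) : Option ℕ := (matchSig l).2.head?

/-- Signature word of a matrix for the `i`-th crystal operator: the columns are the
tensor factors, column `j` contributing `ε = A (i+1) j` minuses and `φ = A i j` pluses. -/
def matSig {r n : ℕ} (i : ℕ) (hi : i + 1 < r) (A : Matrix (Fin r) (Fin n) ℕ) :
    List (ℕ × Bool) :=
  (List.finRange n).flatMap fun j =>
    List.replicate (A ⟨i+1, hi⟩ j) (j.val, false) ++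
      List.replicate (A ⟨i, by omega⟩ j) (j.val, true)

/-- Crystal lowering operator `f_i` on `Mat_{r×n}(ℕ)`: moves one unit from row `i`
to row `i+1` in the selected column (1-based crystal index `i ∈ {1,...,r-1}`,
here 0-based as `i` acting on rows `i, i+1`). -/
def matF {r n : ℕ} (i : ℕ) (A : Matrix (Fin r) (Fin n) ℕ) :
    Option (Matrix (Fin r) (Fin n) ℕ) :=
  if hi : i + 1 < r then
    (fIdx (matSig i hi A)).map fun jj =>
      Matrix.of fun i' j' =>
        if j'.val = jj then
          if i'.val = i then A i' j' - 1
          else if i'.val = i + 1 then A i' j' + 1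
          else A i' j'
        else A i' j'
  else none

/-- Crystal raising operator `e_i` on `Mat_{r×n}(ℕ)`. -/
def matE {r n : ℕ} (i : ℕ) (A : Matrix (Fin r) (Fin n) ℕ) :
    Option (Matrix (Fin r) (Fin n) ℕ) :=
  if hi : i + 1 < r then
    (eIdx (matSig i hi A)).map fun jj =>
      Matrix.of fun i' j' =>
        if j'.val = jj then
          if i'.val = i then A i' j' + 1
          else if i'.val = i + 1 then A i' j' - 1
          else A i' j'
        else A i' j'
  else none

/-- Cut a word into rows of the given lengths. -/
def reshape : List ℕ → List ℕ → List (List ℕ)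
  | [], _ => []
  | l :: ls, w => w.take l :: reshape ls (w.drop l)

/-- Signature word of a tableau for the `i`-th crystal operator (letters `i+1` are
pluses, letters `i+2` are minuses), reading the tableau row by row. -/
def tabSig (i : ℕ) (T : List (List ℕ)) : List (ℕ × Bool) :=
  (T.flatten.zipIdx.map Prod.swap).filterMap fun p =>
    if p.2 = i + 1 then some (p.1, true)
    else if p.2 = i + 2 then some (p.1, false) else none

/-- Crystal lowering operator `f_i` on semistandard tableaux: changes one entry
`i+1` into `i+2`. -/
def tabF (i : ℕ) (T : List (List ℕ)) : Option (List (List ℕ)) :=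
  (fIdx (tabSig i T)).map fun k => reshape (shape T) (T.flatten.set k (i + 2))

/-- Crystal raising operator `e_i` on semistandard tableaux: changes one entry
`i+2` into `i+1`. -/
def tabE (i : ℕ) (T : List (List ℕ)) : Option (List (List ℕ)) :=
  (eIdx (tabSig i T)).map fun k => reshape (shape T) (T.flatten.set k (i + 1))

/-- Restriction of a tableau: remove all boxes with entry `> m`. -/
def restrict (m : ℕ) (T : List (List ℕ)) : List (List ℕ) :=
  (T.map fun row => row.filter (· ≤ m)).filter (· ≠ [])

end RSKPaper

namespace RSKPaper

/-- The `i`-th part of a partition given as a list of row lengths (0 beyond the end). -/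
def part (l : List ℕ) (i : ℕ) : ℕ := l.getD i 0

/-- `l` is a partition shape: weakly decreasing positive parts. -/
def IsShape (l : List ℕ) : Prop := l.Pairwise (· ≥ ·) ∧ ∀ x ∈ l, 0 < x

/-- `mu ⊆ l` and the skew shape `l \ mu` is a horizontal strip (at most one box in
every column), expressed by the interlacing condition. -/
def IsHStrip (mu l : List ℕ) : Prop :=
  ∀ i, part l (i + 1) ≤ part mu i ∧ part mu i ≤ part l i

/-- Row-insert into `T` the entry `1` exactly `A 1` times, then `2` exactly `A 2`
times, ..., then `r` exactly `A r` times. -/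
def multiInsert {r : ℕ} (T : List (List ℕ)) (A : Fin r → ℕ) : List (List ℕ) :=
  ((List.finRange r).flatMap fun i => List.replicate (A i) (i.val + 1)).foldl insertT T
/-!
When a weakly increasing word is inserted, each new box lies strictly to the right of the
previous one (row bumping lemma), so the shape grows by a horizontal strip and the box of the
last letter lies in the topmost row that grew. Knowing `λ` and the result, one can therefore
locate that box, undo its insertion by reverse bumping and recurse: this gives injectivity.
Conversely, reverse bumping from the topmost grown row of any tableau of shape `μ ⊇ λ` yields
letters that, read backwards, form a weakly increasing word, again by the row bumping lemma:
this gives surjectivity. Finally `A ↦ 1^(A 1) ⋯ r^(A r)` identifies `ℕ^r` with the weakly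
increasing words in `{1, …, r}`.
-/

section Lists

lemma length_takeWhile_eq_iff {p : ℕ → Bool} {l : List ℕ} {n : ℕ} :
    (l.takeWhile p).length = n ↔ n ≤ l.length ∧ (∀ j < n, p (l.getD j 0)) ∧
      (n < l.length → p (l.getD n 0) = false) := by
  induction l generalizing n with
  | nil =>
    constructor
    · rintro rfl; simp
    · rintro ⟨h, -, -⟩; simp only [List.length_nil, Nat.le_zero] at h; simp [h]
  | cons a l ih =>
    rw [List.takeWhile_cons]
    cases h : p a
    · rcases n with _ | n
      · simp [h]
      · simp only [Bool.false_eq_true, if_false, List.length_nil]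
        refine ⟨by omega, fun ⟨_, h2, _⟩ => ?_⟩
        simpa [h] using h2 0 (by omega)
    · rcases n with _ | n
      · simp [h]
      · simp only [if_true, List.length_cons, Nat.add_right_cancel_iff, ih,
          Nat.add_le_add_iff_right, Nat.add_lt_add_iff_right, List.getD_cons_succ]
        constructor
        · rintro ⟨h1, h2, h3⟩
          refine ⟨h1, fun j hj => ?_, h3⟩
          rcases j with _ | j
          · simpa using h
          · simpa using h2 j (by omega)
        · rintro ⟨h1, h2, h3⟩
          exact ⟨h1, fun j hj => by simpa using h2 (j + 1) (by omega), h3⟩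

lemma pairwise_le_iff_getD {l : List ℕ} :
    l.Pairwise (· ≤ ·) ↔ ∀ i j, i < j → j < l.length → l.getD i 0 ≤ l.getD j 0 := by
  rw [List.pairwise_iff_getElem]
  constructor
  · intro h i j hij hj
    rw [List.getD_eq_getElem _ _ (by omega), List.getD_eq_getElem _ _ hj]
    exact h i j (by omega) hj hij
  · intro h i j hi hj hij
    have := h i j hij hj
    rwa [List.getD_eq_getElem _ _ hi, List.getD_eq_getElem _ _ hj] at this

lemma getD_le_getD_of_pairwise {l : List ℕ} (h : l.Pairwise (· ≤ ·)) {i j : ℕ}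
    (hij : i ≤ j) (hj : j < l.length) : l.getD i 0 ≤ l.getD j 0 := by
  rcases hij.eq_or_lt with rfl | hij
  · rfl
  · exact pairwise_le_iff_getD.mp h i j hij hj

lemma getD_set_of_lt {l : List ℕ} {i : ℕ} (hi : i < l.length) (a j : ℕ) :
    (l.set i a).getD j 0 = if j = i then a else l.getD j 0 := by
  simp only [List.getD_eq_getElem?_getD, List.getElem?_set]
  by_cases h : j = i
  · subst h; simp [hi]
  · simp [Ne.symm h, h]

end Lists

section Partitions

@[simp] lemma part_nil (i : ℕ) : part [] i = 0 := by simp [part]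

@[simp] lemma part_cons_zero (a : ℕ) (s : List ℕ) : part (a :: s) 0 = a := by simp [part]

@[simp] lemma part_cons_succ (a : ℕ) (s : List ℕ) (i : ℕ) :
    part (a :: s) (i + 1) = part s i := by
  simp [part]

lemma part_eq_zero {s : List ℕ} {i : ℕ} (h : s.length ≤ i) : part s i = 0 :=
  List.getD_eq_default _ _ h

lemma part_shape (T : List (List ℕ)) (i : ℕ) : part (shape T) i = (T.getD i []).length := by
  simpa [part, shape] using List.getD_map (l := T) (n := i) (d := []) List.length

@[simp] lemma length_shape (T : List (List ℕ)) : (shape T).length = T.length := List.length_map _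

def addBox : List ℕ → ℕ → List ℕ
  | [], _ => [1]
  | a :: s, 0 => (a + 1) :: s
  | a :: s, i + 1 => a :: addBox s i

lemma part_addBox {s : List ℕ} {i : ℕ} (hi : i ≤ s.length) (j : ℕ) :
    part (addBox s i) j = part s j + if j = i then 1 else 0 := by
  induction s generalizing i j with
  | nil =>
    obtain rfl : i = 0 := by simpa using hi
    rcases j with _ | j <;> simp [addBox, part]
  | cons a s ih =>
    rcases i with _ | i <;> rcases j with _ | j
    · simp [addBox]
    · simp [addBox]
    · simp [addBox]
    · simp [addBox, ih (by simpa using hi)]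

lemma sum_addBox {s : List ℕ} {i : ℕ} : (addBox s i).sum = s.sum + 1 := by
  induction s generalizing i with
  | nil => simp [addBox]
  | cons a s ih => rcases i with _ | i <;> simp [addBox, ih] <;> omega

lemma sum_le_sum_of_part_le {s t : List ℕ} (h : ∀ i, part s i ≤ part t i) :
    s.sum ≤ t.sum := by
  induction s generalizing t with
  | nil => simp
  | cons a s ih =>
    rcases t with _ | ⟨b, t⟩
    · have h0 := h 0
      have hs := ih (t := []) fun i => by simpa using h (i + 1)
      simp only [part_cons_zero, part_nil, Nat.le_zero, List.sum_nil] at h0 hs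
      simp [h0, hs]
    · have := ih fun i => by simpa using h (i + 1)
      have := h 0
      simp only [part_cons_zero, List.sum_cons] at *
      omega

lemma exists_part_lt_of_sum_lt {s t : List ℕ} (h : s.sum < t.sum) :
    ∃ i, part s i < part t i := by
  by_contra! hle
  exact (sum_le_sum_of_part_le hle).not_gt h

lemma eq_of_part_le_of_sum_le {s t : List ℕ} (hs : ∀ x ∈ s, 0 < x) (ht : ∀ x ∈ t, 0 < x)
    (h : ∀ i, part s i ≤ part t i) (hsum : t.sum ≤ s.sum) : s = t := by
  induction s generalizing t with
  | nil =>
    simp only [List.sum_nil, Nat.le_zero, List.sum_eq_zero_iff] at hsum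
    exact (List.eq_nil_iff_forall_not_mem.mpr fun x hx => (ht x hx).ne' (hsum x hx)).symm
  | cons a s ih =>
    rcases t with _ | ⟨b, t⟩
    · have h0 := h 0
      have ha := hs a List.mem_cons_self
      simp only [part_cons_zero, part_nil] at h0
      omega
    · have hst := sum_le_sum_of_part_le (s := s) (t := t) fun i => by simpa using h (i + 1)
      have hab := h 0
      simp only [part_cons_zero, List.sum_cons] at hab hsum
      obtain rfl : a = b := by omega
      rw [ih (fun x hx => hs x (List.mem_cons_of_mem _ hx))
        (fun x hx => ht x (List.mem_cons_of_mem _ hx))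
        (fun i => by simpa using h (i + 1)) (by omega)]

lemma IsHStrip.of_part_eq_add {lam mu nu : List ℕ} {i : ℕ} (h : IsHStrip lam mu)
    (hi : part lam i < part mu i)
    (hpart : ∀ j, part mu j = part nu j + if j = i then 1 else 0) : IsHStrip lam nu := fun j => by
  have h₁ := h j
  have h₂ := hpart j
  have h₃ := hpart (j + 1)
  refine ⟨by split_ifs at h₃ <;> omega, ?_⟩
  split_ifs at h₂ with hj
  · subst hj; omega
  · omega

end Partitions

section RowInsertion

def insPos (r : List ℕ) (x : ℕ) : ℕ := (r.takeWhile (· ≤ x)).length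

lemma insPos_le_length (r : List ℕ) (x : ℕ) : insPos r x ≤ r.length :=
  (length_takeWhile_eq_iff.mp rfl).1

lemma getD_le_of_lt_insPos {r : List ℕ} {x j : ℕ} (hj : j < insPos r x) : r.getD j 0 ≤ x :=
  of_decide_eq_true ((length_takeWhile_eq_iff.mp (rfl : insPos r x = _)).2.1 j hj)

lemma lt_getD_insPos {r : List ℕ} {x : ℕ} (h : insPos r x < r.length) :
    x < r.getD (insPos r x) 0 := by
  simpa using (length_takeWhile_eq_iff.mp (rfl : insPos r x = _)).2.2 h

lemma le_insPos {r : List ℕ} {x n : ℕ} (hn : n ≤ r.length) (h : ∀ j < n, r.getD j 0 ≤ x) :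
    n ≤ insPos r x := by
  by_contra! hlt
  exact (lt_getD_insPos (by omega)).not_ge (h _ hlt)

lemma lt_getD_of_insPos_le {r : List ℕ} (hr : r.Pairwise (· ≤ ·)) {x j : ℕ}
    (hj : insPos r x ≤ j) (hjr : j < r.length) : x < r.getD j 0 :=
  (lt_getD_insPos (by omega)).trans_le (getD_le_getD_of_pairwise hr hj hjr)

lemma insRow_eq (x : ℕ) (r : List ℕ) : insRow x r =
    if insPos r x < r.length then (r.set (insPos r x) x, some (r.getD (insPos r x) 0))
    else (r ++ [x], none) := by
  induction r with
  | nil => simp [insRow, insPos]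
  | cons a r ih =>
    by_cases hax : a ≤ x
    · have hpos : insPos (a :: r) x = insPos r x + 1 := by simp [insPos, hax]
      rw [insRow, if_pos hax, ih, hpos]
      split_ifs <;> simp_all; omega
    · have hpos : insPos (a :: r) x = 0 := by simp [insPos, hax]
      simp [insRow, hax, hpos]

lemma getD_insRow_fst (x : ℕ) (r : List ℕ) (j : ℕ) :
    (insRow x r).1.getD j 0 = if j = insPos r x then x else r.getD j 0 := by
  rw [insRow_eq]
  split_ifs with h hj hj
  · rw [getD_set_of_lt h, if_pos hj]
  · rw [getD_set_of_lt h, if_neg hj]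
  · have : insPos r x = r.length := le_antisymm (insPos_le_length r x) (not_lt.mp h)
    subst hj; rw [this, List.getD_append_right _ _ _ _ le_rfl]; simp
  · have : insPos r x = r.length := le_antisymm (insPos_le_length r x) (not_lt.mp h)
    rcases lt_or_gt_of_ne hj with hj | hj
    · rw [List.getD_append _ _ _ _ (by omega)]
    · rw [List.getD_eq_default _ _ (by simp; omega), List.getD_eq_default _ _ (by omega)]

lemma length_insRow_fst (x : ℕ) (r : List ℕ) :
    (insRow x r).1.length = max r.length (insPos r x + 1) := by
  have := insPos_le_length r x
  rw [insRow_eq]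
  split_ifs <;> simp <;> omega

lemma insRow_snd_eq_some {x b : ℕ} {r : List ℕ} :
    (insRow x r).2 = some b ↔ insPos r x < r.length ∧ r.getD (insPos r x) 0 = b := by
  rw [insRow_eq]; split_ifs <;> simp_all

lemma insRow_snd_eq_none {x : ℕ} {r : List ℕ} :
    (insRow x r).2 = none ↔ insPos r x = r.length := by
  have := insPos_le_length r x
  rw [insRow_eq]; split_ifs <;> simp <;> omega

lemma insRow_fst_of_none {x : ℕ} {r : List ℕ} (h : (insRow x r).2 = none) :
    (insRow x r).1 = r ++ [x] := by
  have := insRow_snd_eq_none.mp h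
  rw [insRow_eq, if_neg (by omega)]

lemma pairwise_insRow_fst {r : List ℕ} (hr : r.Pairwise (· ≤ ·)) (x : ℕ) :
    (insRow x r).1.Pairwise (· ≤ ·) := by
  rw [pairwise_le_iff_getD]
  intro i j hij hj
  rw [length_insRow_fst] at hj
  have := insPos_le_length r x
  rw [getD_insRow_fst, getD_insRow_fst]
  split_ifs with hi' hj'
  · omega
  · exact (lt_getD_of_insPos_le hr (by omega) (by omega)).le
  · exact getD_le_of_lt_insPos (by omega)
  · exact getD_le_getD_of_pairwise hr hij.le (by omega)

lemma getD_insRow_fst_le (x : ℕ) (r : List ℕ) {j : ℕ} (hj : j < r.length) :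
    (insRow x r).1.getD j 0 ≤ r.getD j 0 := by
  rw [getD_insRow_fst]
  split_ifs with h
  · subst h; exact (lt_getD_insPos hj).le
  · rfl

end RowInsertion

section Dominates

variable {r s : List ℕ}

def Dominates (a b : List ℕ) : Prop :=
  b.length ≤ a.length ∧ ∀ k < b.length, a.getD k 0 < b.getD k 0

lemma Dominates.insRow_fst (h : Dominates r s) (x : ℕ) : Dominates (insRow x r).1 s := by
  refine ⟨h.1.trans (by rw [length_insRow_fst]; omega), fun k hk => ?_⟩
  exact (getD_insRow_fst_le x r (by have := h.1; omega)).trans_lt (h.2 k hk)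

lemma insPos_le_of_dominates (h : Dominates r s) (p : ℕ) :
    insPos s (r.getD p 0) ≤ p := by
  by_contra! hlt
  have hps : p < s.length := hlt.trans_le (insPos_le_length _ _)
  exact (h.2 p hps).not_ge (getD_le_of_lt_insPos hlt)

lemma Dominates.insRow_bump (h : Dominates r s) {x b : ℕ}
    (hb : (insRow x r).2 = some b) : Dominates (insRow x r).1 (insRow b s).1 := by
  obtain ⟨hp, rfl⟩ := insRow_snd_eq_some.mp hb
  have hq := insPos_le_of_dominates h (insPos r x)
  have hxb := lt_getD_insPos hp
  refine ⟨by rw [length_insRow_fst, length_insRow_fst]; have := h.1; omega, fun j hj => ?_⟩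
  rw [length_insRow_fst] at hj
  rw [getD_insRow_fst _ s]
  split_ifs with hjq
  · subst hjq
    rw [getD_insRow_fst]
    split_ifs with hjp
    · exact hxb
    · exact (getD_le_of_lt_insPos (by omega)).trans_lt hxb
  · have hjs : j < s.length := by have := insPos_le_length s (r.getD (insPos r x) 0); omega
    exact (getD_insRow_fst_le x r (by have := h.1; omega)).trans_lt (h.2 j hjs)

end Dominates

section ReverseRowInsertion

variable {r s : List ℕ} {c : ℕ}

def ltPos (r : List ℕ) (c : ℕ) : ℕ := (r.takeWhile (· < c)).length

/-- Reverse row bumping: `c` replaces the rightmost entry of `r` smaller than `c`, which is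
returned. -/
def uninsertRow (c : ℕ) (r : List ℕ) : List ℕ × ℕ :=
  (r.set (ltPos r c - 1) c, r.getD (ltPos r c - 1) 0)

lemma ltPos_le_length : ltPos r c ≤ r.length :=
  (length_takeWhile_eq_iff.mp rfl).1

lemma getD_lt_of_lt_ltPos {j : ℕ} (hj : j < ltPos r c) : r.getD j 0 < c :=
  of_decide_eq_true ((length_takeWhile_eq_iff.mp (rfl : ltPos r c = _)).2.1 j hj)

lemma le_getD_of_ltPos_le (hr : r.Pairwise (· ≤ ·)) {j : ℕ} (hj : ltPos r c ≤ j)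
    (hjr : j < r.length) : c ≤ r.getD j 0 := by
  have := (length_takeWhile_eq_iff.mp (rfl : ltPos r c = _)).2.2 (by omega)
  simp only [decide_eq_false_iff_not, not_lt] at this
  exact this.trans (getD_le_getD_of_pairwise hr hj hjr)

lemma getD_insPos_lt_of_dominates (h : Dominates r (insRow c s).1) :
    r.getD (insPos s c) 0 < c := by
  have := h.2 (insPos s c) (by rw [length_insRow_fst]; omega)
  rwa [getD_insRow_fst, if_pos rfl] at this

lemma insPos_lt_ltPos (hr : r.Pairwise (· ≤ ·)) (h : Dominates r (insRow c s).1) :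
    insPos s c < ltPos r c := by
  by_contra! hk
  have hlen := h.1
  rw [length_insRow_fst] at hlen
  exact (le_getD_of_ltPos_le hr hk (by omega)).not_gt (getD_insPos_lt_of_dominates h)

lemma length_uninsertRow_fst : (uninsertRow c r).1.length = r.length := List.length_set

lemma getD_uninsertRow_fst (hk : 0 < ltPos r c) (j : ℕ) :
    (uninsertRow c r).1.getD j 0 = if j = ltPos r c - 1 then c else r.getD j 0 :=
  getD_set_of_lt (by have := ltPos_le_length (r := r) (c := c); omega) _ _

lemma pairwise_uninsertRow_fst (hr : r.Pairwise (· ≤ ·)) (hk : 0 < ltPos r c) :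
    (uninsertRow c r).1.Pairwise (· ≤ ·) := by
  rw [pairwise_le_iff_getD]
  intro i j hij hj
  rw [length_uninsertRow_fst] at hj
  rw [getD_uninsertRow_fst hk, getD_uninsertRow_fst hk]
  split_ifs with hi hj'
  · omega
  · exact le_getD_of_ltPos_le hr (by omega) hj
  · exact (getD_lt_of_lt_ltPos (by omega)).le
  · exact getD_le_getD_of_pairwise hr hij.le hj

lemma insRow_uninsertRow (hr : r.Pairwise (· ≤ ·)) (hk : 0 < ltPos r c) :
    insRow (uninsertRow c r).2 (uninsertRow c r).1 = (r, some c) := by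
  have hkr : ltPos r c - 1 < r.length := by have := ltPos_le_length (r := r) (c := c); omega
  have hb : r.getD (ltPos r c - 1) 0 < c := getD_lt_of_lt_ltPos (by omega)
  have hpos : insPos (uninsertRow c r).1 (uninsertRow c r).2 = ltPos r c - 1 := by
    refine length_takeWhile_eq_iff.mpr ⟨by rw [length_uninsertRow_fst]; omega, fun j hj => ?_,
      fun _ => ?_⟩
    · rw [getD_uninsertRow_fst hk, if_neg (by omega)]
      exact decide_eq_true (getD_le_getD_of_pairwise hr hj.le hkr)
    · rw [getD_uninsertRow_fst hk, if_pos rfl]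
      exact decide_eq_false (by simpa [uninsertRow] using hb)
  rw [insRow_eq, hpos, if_pos (by rwa [length_uninsertRow_fst]), getD_uninsertRow_fst hk,
    if_pos rfl]
  simp only [uninsertRow, List.set_set, List.getD_eq_getElem _ _ hkr, List.set_getElem_self]

lemma Dominates.uninsertRow (hr : r.Pairwise (· ≤ ·)) (hs : s.Pairwise (· ≤ ·))
    (h : Dominates r (insRow c s).1) : Dominates (uninsertRow c r).1 s := by
  have hqk := insPos_lt_ltPos hr h
  have hlen := h.1
  rw [length_insRow_fst] at hlen
  refine ⟨by rw [length_uninsertRow_fst]; omega, fun j hj => ?_⟩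
  rw [getD_uninsertRow_fst (by omega)]
  split_ifs with hjk
  · exact lt_getD_of_insPos_le hs (by omega) hj
  · by_cases hjq : j = insPos s c
    · subst hjq
      exact (getD_insPos_lt_of_dominates h).trans (lt_getD_insPos hj)
    · have := h.2 j (by rw [length_insRow_fst]; omega)
      rwa [getD_insRow_fst, if_neg hjq] at this

lemma uninsertRow_insRow {x b : ℕ} {r : List ℕ} (hr : r.Pairwise (· ≤ ·))
    (h : (insRow x r).2 = some b) : uninsertRow b (insRow x r).1 = (r, x) := by
  obtain ⟨hp, rfl⟩ := insRow_snd_eq_some.mp h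
  have hxb := lt_getD_insPos hp
  have hk : ltPos (insRow x r).1 (r.getD (insPos r x) 0) = insPos r x + 1 := by
    refine length_takeWhile_eq_iff.mpr ⟨by rw [length_insRow_fst]; omega, fun j hj => ?_,
      fun hj => ?_⟩
    · rw [getD_insRow_fst]
      split_ifs with hjp
      · exact decide_eq_true hxb
      · exact decide_eq_true ((getD_le_of_lt_insPos (by omega)).trans_lt hxb)
    · rw [length_insRow_fst] at hj
      rw [getD_insRow_fst, if_neg (by omega)]
      exact decide_eq_false (not_lt.mpr (getD_le_getD_of_pairwise hr (by omega) (by omega)))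
  have hr' : (insRow x r).1 = r.set (insPos r x) x := by rw [insRow_eq, if_pos hp]
  simp only [uninsertRow, hk, Nat.add_sub_cancel, getD_insRow_fst, if_true]
  rw [hr', List.set_set, List.getD_eq_getElem _ _ hp, List.set_getElem_self]

end ReverseRowInsertion

section Tableaux

lemma isSSYT_nil : IsSSYT [] := ⟨by simp, by simp⟩

lemma isSSYT_cons {r : List ℕ} {T : List (List ℕ)} :
    IsSSYT (r :: T) ↔
      (r ≠ [] ∧ r.Pairwise (· ≤ ·)) ∧ Dominates r (T.getD 0 []) ∧ IsSSYT T := by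
  constructor
  · rintro ⟨h1, h2⟩
    refine ⟨h1 r (by simp), ?_, fun row hr => h1 row (by simp [hr]), fun i hi => ?_⟩
    · rcases T with _ | ⟨s, T⟩
      · exact ⟨Nat.zero_le _, by simp⟩
      · exact h2 0 (by simp)
    · exact h2 (i + 1) (by simpa using hi)
  · rintro ⟨hr, hd, h3, h4⟩
    refine ⟨fun row hrow => ?_, fun i hi => ?_⟩
    · rcases List.mem_cons.mp hrow with rfl | hrow
      · exact hr
      · exact h3 row hrow
    · rcases i with _ | i
      · exact hd
      · exact h4 i (by simpa using hi)

lemma IsSSYT.head_pairwise {T : List (List ℕ)} (hT : IsSSYT T) :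
    (T.getD 0 []).Pairwise (· ≤ ·) := by
  rcases T with _ | ⟨r, T⟩
  · simp
  · exact (isSSYT_cons.mp hT).1.2

lemma IsSSYT.part_antitone {T : List (List ℕ)} (hT : IsSSYT T) : Antitone (part (shape T)) := by
  refine antitone_nat_of_succ_le fun i => ?_
  rcases lt_or_ge (i + 1) T.length with h | h
  · rw [part_shape, part_shape]
    exact (hT.2 i h).1
  · rw [part_eq_zero (by simp; omega)]
    exact Nat.zero_le _

lemma IsSSYT.shape_pos {T : List (List ℕ)} (hT : IsSSYT T) : ∀ x ∈ shape T, 0 < x := by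
  intro x hx
  obtain ⟨row, hrow, rfl⟩ := List.mem_map.mp hx
  exact List.length_pos_iff.mpr (hT.1 row hrow).1

lemma entriesIn_iff {T : List (List ℕ)} {m : ℕ} :
    EntriesIn T m ↔ ∀ a ∈ T.flatten, 1 ≤ a ∧ a ≤ m := by
  simp only [EntriesIn, List.mem_flatten]
  exact ⟨fun h a ⟨row, hrow, ha⟩ => h row hrow a ha,
    fun h row hrow a ha => h a ⟨row, hrow, ha⟩⟩

def newRow : List (List ℕ) → ℕ → ℕ
  | [], _ => 0
  | r :: rs, x =>
      match (insRow x r).2 with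
      | none => 0
      | some b => newRow rs b + 1

def newCol (T : List (List ℕ)) (x : ℕ) : ℕ := part (shape T) (newRow T x)

end Tableaux

section InsertionStep

variable {x b : ℕ} {r : List ℕ} {rs : List (List ℕ)}

lemma insertT_cons_of_none (h : (insRow x r).2 = none) :
    insertT (r :: rs) x = (insRow x r).1 :: rs := by
  rw [insertT]; rcases hr : insRow x r with ⟨r', _ | b⟩ <;> simp_all

lemma insertT_cons_of_some (h : (insRow x r).2 = some b) :
    insertT (r :: rs) x = (insRow x r).1 :: insertT rs b := by
  rw [insertT]; rcases hr : insRow x r with ⟨r', _ | b⟩ <;> simp_all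

lemma newRow_cons_of_none (h : (insRow x r).2 = none) : newRow (r :: rs) x = 0 := by
  simp [newRow, h]

lemma newRow_cons_of_some (h : (insRow x r).2 = some b) :
    newRow (r :: rs) x = newRow rs b + 1 := by
  simp [newRow, h]

lemma newCol_cons_of_none (h : (insRow x r).2 = none) : newCol (r :: rs) x = r.length := by
  simp [newCol, newRow_cons_of_none h, shape]

lemma newCol_cons_of_some (h : (insRow x r).2 = some b) : newCol (r :: rs) x = newCol rs b := by
  simp [newCol, newRow_cons_of_some h, shape]

end InsertionStep

section Insertion

lemma head_insertT (T : List (List ℕ)) (x : ℕ) :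
    (insertT T x).getD 0 [] = (insRow x (T.getD 0 [])).1 := by
  rcases T with _ | ⟨r, rs⟩
  · rfl
  · rcases h : (insRow x r).2 with _ | b
    · simp [insertT_cons_of_none h]
    · simp [insertT_cons_of_some h]

lemma perm_insRow (x : ℕ) (r : List ℕ) :
    ((insRow x r).1 ++ (insRow x r).2.toList).Perm (x :: r) := by
  induction r with
  | nil => simp [insRow]
  | cons a r ih =>
    by_cases hax : a ≤ x
    · simp only [insRow, if_pos hax, List.cons_append]
      exact (ih.cons a).trans (List.Perm.swap x a r)
    · simp only [insRow, if_neg hax, Option.toList_some]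
      exact (List.perm_append_singleton a (x :: r)).trans (List.Perm.swap x a r)

lemma perm_flatten_insertT (T : List (List ℕ)) (x : ℕ) :
    (insertT T x).flatten.Perm (x :: T.flatten) := by
  induction T generalizing x with
  | nil => simp [insertT]
  | cons r rs ih =>
    have hrow := perm_insRow x r
    rcases h : (insRow x r).2 with _ | b
    · rw [h, Option.toList_none, List.append_nil] at hrow
      simpa [insertT_cons_of_none h] using hrow.append_right rs.flatten
    · rw [h, Option.toList_some] at hrow
      rw [insertT_cons_of_some h, List.flatten_cons, List.flatten_cons]
      refine ((ih b).append_left _).trans ?_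
      simpa using List.perm_middle.trans
        (((List.perm_append_singleton b _).symm.append_right _).trans (hrow.append_right _))

lemma IsSSYT.insertT {T : List (List ℕ)} (hT : IsSSYT T) (x : ℕ) : IsSSYT (insertT T x) := by
  induction T generalizing x with
  | nil =>
    exact isSSYT_cons.mpr ⟨⟨by simp, by simp⟩, ⟨Nat.zero_le _, by simp⟩, isSSYT_nil⟩
  | cons r rs ih =>
    obtain ⟨⟨-, hr⟩, hdom, hrs⟩ := isSSYT_cons.mp hT
    have hrow : (insRow x r).1 ≠ [] ∧ (insRow x r).1.Pairwise (· ≤ ·) :=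
      ⟨List.ne_nil_of_length_pos (by rw [length_insRow_fst]; omega), pairwise_insRow_fst hr x⟩
    rcases h : (insRow x r).2 with _ | b
    · rw [insertT_cons_of_none h]
      exact isSSYT_cons.mpr ⟨hrow, hdom.insRow_fst x, hrs⟩
    · rw [insertT_cons_of_some h]
      refine isSSYT_cons.mpr ⟨hrow, ?_, ih hrs b⟩
      rw [head_insertT]
      exact hdom.insRow_bump h

lemma newRow_le_length (T : List (List ℕ)) (x : ℕ) : newRow T x ≤ T.length := by
  induction T generalizing x with
  | nil => simp [newRow]
  | cons r rs ih =>
    rcases h : (insRow x r).2 with _ | b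
    · simp [newRow_cons_of_none h]
    · simpa [newRow_cons_of_some h] using ih b

lemma shape_insertT (T : List (List ℕ)) (x : ℕ) :
    shape (insertT T x) = addBox (shape T) (newRow T x) := by
  induction T generalizing x with
  | nil => rfl
  | cons r rs ih =>
    rcases h : (insRow x r).2 with _ | b
    · have := insRow_snd_eq_none.mp h
      simp [insertT_cons_of_none h, newRow_cons_of_none h, shape, addBox, length_insRow_fst, this]
    · have := (insRow_snd_eq_some.mp h).1
      rw [insertT_cons_of_some h, newRow_cons_of_some h]
      simp only [shape, List.map_cons, addBox] at ih ⊢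
      rw [ih, length_insRow_fst]
      congr 1
      omega

lemma part_insertT (T : List (List ℕ)) (x j : ℕ) :
    part (shape (insertT T x)) j = part (shape T) j + if j = newRow T x then 1 else 0 := by
  rw [shape_insertT, part_addBox (by simpa using newRow_le_length T x)]

end Insertion

section Bumping

lemma newCol_le_insPos {T : List (List ℕ)} (hT : IsSSYT T) (x : ℕ) :
    newCol T x ≤ insPos (T.getD 0 []) x := by
  induction T generalizing x with
  | nil => simp [newCol, newRow, shape]
  | cons r rs ih =>
    obtain ⟨-, hdom, hrs⟩ := isSSYT_cons.mp hT
    rcases h : (insRow x r).2 with _ | b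
    · rw [newCol_cons_of_none h, List.getD_cons_zero, insRow_snd_eq_none.mp h]
    · obtain ⟨-, rfl⟩ := insRow_snd_eq_some.mp h
      rw [newCol_cons_of_some h]
      exact (ih hrs _).trans (insPos_le_of_dominates hdom _)

lemma newCol_le_length_head {T : List (List ℕ)} (hT : IsSSYT T) (x : ℕ) :
    newCol T x ≤ (T.getD 0 []).length :=
  (newCol_le_insPos hT x).trans (insPos_le_length _ _)

lemma newCol_lt_newCol_insertT {T : List (List ℕ)} (hT : IsSSYT T) {x y : ℕ} (hxy : x ≤ y) :
    newCol T x < newCol (insertT T x) y := by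
  induction T generalizing x y with
  | nil => simp [newCol, newRow, insertT, insRow, hxy, shape]
  | cons r rs ih =>
    obtain ⟨⟨-, hr⟩, hdom, hrs⟩ := isSSYT_cons.mp hT
    have hq : insPos r x + 1 ≤ insPos (insRow x r).1 y := by
      refine le_insPos (by rw [length_insRow_fst]; omega) fun j hj => ?_
      rw [getD_insRow_fst]
      split_ifs with hjp
      · exact hxy
      · exact (getD_le_of_lt_insPos (by omega)).trans hxy
    rcases h : (insRow x r).2 with _ | b
    · have hp := insRow_snd_eq_none.mp h
      have h' : (insRow y (insRow x r).1).2 = none := by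
        rw [insRow_snd_eq_none]
        exact le_antisymm (insPos_le_length _ _) (by rw [length_insRow_fst]; omega)
      rw [newCol_cons_of_none h, insertT_cons_of_none h, newCol_cons_of_none h',
        length_insRow_fst]
      omega
    · obtain ⟨hp, rfl⟩ := insRow_snd_eq_some.mp h
      rw [newCol_cons_of_some h, insertT_cons_of_some h]
      rcases h' : (insRow y (insRow x r).1).2 with _ | b'
      · rw [newCol_cons_of_none h', length_insRow_fst]
        have := (newCol_le_insPos hrs _).trans (insPos_le_of_dominates hdom (insPos r x))
        omega
      · obtain ⟨hq', rfl⟩ := insRow_snd_eq_some.mp h'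
        rw [newCol_cons_of_some h']
        refine ih hrs ?_
        rw [length_insRow_fst] at hq'
        rw [getD_insRow_fst, if_neg (by omega)]
        exact getD_le_getD_of_pairwise hr (by omega) (by omega)

lemma newCol_insertT_le_newCol {T : List (List ℕ)} (hT : IsSSYT T) {x y : ℕ} (hyx : y < x) :
    newCol (insertT T x) y ≤ newCol T x := by
  induction T generalizing x y with
  | nil => simp [newCol, newRow, insertT, insRow, Nat.not_le.mpr hyx, shape]
  | cons r rs ih =>
    obtain ⟨-, hdom, hrs⟩ := isSSYT_cons.mp hT
    have hlen : insPos r x < (insRow x r).1.length := by rw [length_insRow_fst]; omega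
    have hq : insPos (insRow x r).1 y ≤ insPos r x := by
      by_contra! hlt
      have := getD_le_of_lt_insPos hlt
      rw [getD_insRow_fst, if_pos rfl] at this
      omega
    obtain ⟨b', hb'⟩ : ∃ b', (insRow y (insRow x r).1).2 = some b' :=
      Option.ne_none_iff_exists'.mp fun h => by rw [insRow_snd_eq_none] at h; omega
    obtain ⟨-, rfl⟩ := insRow_snd_eq_some.mp hb'
    have hb'x : (insRow x r).1.getD (insPos (insRow x r).1 y) 0 ≤ x := by
      rw [getD_insRow_fst]
      split_ifs with h
      · rfl
      · exact getD_le_of_lt_insPos (by omega)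
    rcases h : (insRow x r).2 with _ | b
    · rw [newCol_cons_of_none h, insertT_cons_of_none h, newCol_cons_of_some hb']
      exact (newCol_le_length_head hrs _).trans hdom.1
    · obtain ⟨hp, rfl⟩ := insRow_snd_eq_some.mp h
      rw [newCol_cons_of_some h, insertT_cons_of_some h, newCol_cons_of_some hb']
      exact ih hrs (hb'x.trans_lt (lt_getD_insPos hp))

end Bumping

section ReverseInsertion

/-- Reverse insertion, starting from the last box of row `i`. -/
def uninsert : List (List ℕ) → ℕ → List (List ℕ) × ℕ
  | [], _ => ([], 0)
  | r :: rs, 0 => (if r.dropLast = [] then rs else r.dropLast :: rs, r.getLastD 0)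
  | r :: rs, i + 1 =>
      let p := uninsert rs i
      let q := uninsertRow p.2 r
      (q.1 :: p.1, q.2)

lemma uninsert_cons_succ (r : List ℕ) (rs : List (List ℕ)) (i : ℕ) :
    uninsert (r :: rs) (i + 1) =
      ((uninsertRow (uninsert rs i).2 r).1 :: (uninsert rs i).1,
        (uninsertRow (uninsert rs i).2 r).2) := rfl

lemma uninsert_insertT {T : List (List ℕ)} (hT : IsSSYT T) (x : ℕ) :
    uninsert (insertT T x) (newRow T x) = (T, x) := by
  induction T generalizing x with
  | nil => simp [insertT, newRow, uninsert]
  | cons r rs ih =>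
    obtain ⟨⟨hne, hr⟩, -, hrs⟩ := isSSYT_cons.mp hT
    rcases h : (insRow x r).2 with _ | b
    · simp [insertT_cons_of_none h, newRow_cons_of_none h, insRow_fst_of_none h, uninsert, hne]
    · rw [insertT_cons_of_some h, newRow_cons_of_some h]
      simp [uninsert_cons_succ, ih hrs b, uninsertRow_insRow hr h]

lemma uninsert_spec_zero {r : List ℕ} {rs : List (List ℕ)} (hT : IsSSYT (r :: rs))
    (hc : (rs.getD 0 []).length < r.length) :
    IsSSYT (uninsert (r :: rs) 0).1 ∧
      insertT (uninsert (r :: rs) 0).1 (uninsert (r :: rs) 0).2 = r :: rs ∧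
      newRow (uninsert (r :: rs) 0).1 (uninsert (r :: rs) 0).2 = 0 := by
  obtain ⟨⟨hne, hr⟩, hdom, hrs⟩ := isSSYT_cons.mp hT
  obtain ⟨u, x, rfl⟩ : ∃ u x, r = u ++ [x] :=
    ⟨r.dropLast, r.getLast hne, (List.dropLast_concat_getLast hne).symm⟩
  have hux : ∀ j < u.length, u.getD j 0 ≤ x := fun j hj => by
    have := getD_le_getD_of_pairwise hr (j := u.length) hj.le (by simp)
    rwa [List.getD_append _ _ _ _ hj, List.getD_append_right _ _ _ _ le_rfl, Nat.sub_self,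
      List.getD_cons_zero] at this
  have hnone : (insRow x u).2 = none :=
    insRow_snd_eq_none.mpr (le_antisymm (insPos_le_length _ _) (le_insPos le_rfl hux))
  have hlen : (rs.getD 0 []).length ≤ u.length := by
    simp only [List.length_append, List.length_singleton] at hc; omega
  rcases eq_or_ne u [] with rfl | hu
  · obtain rfl : rs = [] := by
      rcases rs with _ | ⟨s, rs⟩
      · rfl
      · exact absurd (List.length_eq_zero_iff.mp (by simpa using hlen)) (isSSYT_cons.mp hrs).1.1
    simp [uninsert, isSSYT_nil, insertT, newRow]
  · simp only [uninsert, List.dropLast_concat, if_neg hu, List.getLastD_concat]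
    refine ⟨isSSYT_cons.mpr ⟨⟨hu, hr.sublist (List.sublist_append_left _ _)⟩,
      ⟨hlen, fun k hk => ?_⟩, hrs⟩,
      by rw [insertT_cons_of_none hnone, insRow_fst_of_none hnone], newRow_cons_of_none hnone⟩
    have := hdom.2 k hk
    rwa [List.getD_append _ _ _ _ (by omega)] at this

lemma uninsert_spec {T : List (List ℕ)} {i : ℕ} (hT : IsSSYT T)
    (hc : part (shape T) (i + 1) < part (shape T) i) :
    IsSSYT (uninsert T i).1 ∧ insertT (uninsert T i).1 (uninsert T i).2 = T ∧
      newRow (uninsert T i).1 (uninsert T i).2 = i := by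
  induction T generalizing i with
  | nil => simp [shape] at hc
  | cons r rs ih =>
    rcases i with _ | i
    · exact uninsert_spec_zero hT (by simpa [part_shape] using hc)
    obtain ⟨⟨hne, hr⟩, hdom, hrs⟩ := isSSYT_cons.mp hT
    obtain ⟨hS, hins, hrow⟩ := ih hrs (by simpa [shape] using hc)
    set c := (uninsert rs i).2
    set rs' := (uninsert rs i).1
    have hdom' : Dominates r (insRow c (rs'.getD 0 [])).1 := by
      rwa [← head_insertT, hins]
    have hk := (Nat.zero_le _).trans_lt (insPos_lt_ltPos hr hdom')
    have hbump := insRow_uninsertRow hr hk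
    refine ⟨isSSYT_cons.mpr ⟨⟨?_, pairwise_uninsertRow_fst hr hk⟩,
      hdom'.uninsertRow hr hS.head_pairwise, hS⟩, ?_, ?_⟩
    · rw [← List.length_pos_iff, length_uninsertRow_fst]
      exact List.length_pos_iff.mpr hne
    · rw [uninsert_cons_succ, insertT_cons_of_some (congrArg Prod.snd hbump),
        congrArg Prod.fst hbump, hins]
    · rw [uninsert_cons_succ, newRow_cons_of_some (congrArg Prod.snd hbump), hrow]

end ReverseInsertion

section Words

def insertWord (T : List (List ℕ)) (w : List ℕ) : List (List ℕ) := w.foldl insertT T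

def newBoxes : List (List ℕ) → List ℕ → List (ℕ × ℕ)
  | _, [] => []
  | T, a :: w => (newRow T a, newCol T a) :: newBoxes (insertT T a) w

@[simp] lemma insertWord_nil (T : List (List ℕ)) : insertWord T [] = T := rfl

@[simp] lemma insertWord_cons (T : List (List ℕ)) (a : ℕ) (w : List ℕ) :
    insertWord T (a :: w) = insertWord (insertT T a) w := rfl

lemma insertWord_append (T : List (List ℕ)) (w₁ w₂ : List ℕ) :
    insertWord T (w₁ ++ w₂) = insertWord (insertWord T w₁) w₂ := List.foldl_append

lemma insertWord_concat (T : List (List ℕ)) (w : List ℕ) (y : ℕ) :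
    insertWord T (w ++ [y]) = insertT (insertWord T w) y := by
  rw [insertWord_append]; rfl

lemma newBoxes_append (T : List (List ℕ)) (w₁ w₂ : List ℕ) :
    newBoxes T (w₁ ++ w₂) = newBoxes T w₁ ++ newBoxes (insertWord T w₁) w₂ := by
  induction w₁ generalizing T with
  | nil => rfl
  | cons a w ih => simp [newBoxes, ih]

lemma IsSSYT.insertWord {T : List (List ℕ)} (hT : IsSSYT T) (w : List ℕ) :
    IsSSYT (insertWord T w) := by
  induction w generalizing T with
  | nil => exact hT
  | cons a w ih => exact ih (hT.insertT a)

lemma perm_flatten_insertWord (T : List (List ℕ)) (w : List ℕ) :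
    (insertWord T w).flatten.Perm (w ++ T.flatten) := by
  induction w generalizing T with
  | nil => rfl
  | cons a w ih =>
    exact (ih _).trans (((perm_flatten_insertT T a).append_left w).trans List.perm_middle)

lemma entriesIn_insertWord_iff {T : List (List ℕ)} {w : List ℕ} {m : ℕ} :
    EntriesIn (insertWord T w) m ↔ EntriesIn T m ∧ ∀ a ∈ w, 1 ≤ a ∧ a ≤ m := by
  simp only [entriesIn_iff, (perm_flatten_insertWord T w).mem_iff, List.mem_append]
  grind

lemma part_le_part_insertWord (T : List (List ℕ)) (w : List ℕ) (j : ℕ) :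
    part (shape T) j ≤ part (shape (insertWord T w)) j := by
  induction w generalizing T with
  | nil => rfl
  | cons a w ih => exact (by rw [part_insertT]; omega : _ ≤ _).trans (ih _)

lemma sum_shape_insertWord (T : List (List ℕ)) (w : List ℕ) :
    (shape (insertWord T w)).sum = (shape T).sum + w.length := by
  induction w generalizing T with
  | nil => rfl
  | cons a w ih => simp [ih, shape_insertT, sum_addBox]; omega

lemma mem_newBoxes_iff (T : List (List ℕ)) (w : List ℕ) (ρ c : ℕ) :
    (ρ, c) ∈ newBoxes T w ↔
      part (shape T) ρ ≤ c ∧ c < part (shape (insertWord T w)) ρ := by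
  induction w generalizing T with
  | nil => simp [newBoxes]
  | cons a w ih =>
    have hpart := part_insertT T a ρ
    have hmono := part_le_part_insertWord (insertT T a) w ρ
    simp only [newBoxes, List.mem_cons, Prod.mk.injEq, ih, insertWord_cons, newCol]
    constructor
    · rintro (⟨rfl, rfl⟩ | ⟨h1, h2⟩)
      · simp only [if_true] at hpart; omega
      · split_ifs at hpart <;> omega
    · rintro ⟨h1, h2⟩
      by_cases h : c < part (shape (insertT T a)) ρ
      · split_ifs at hpart with hρ
        · left; exact ⟨hρ, by subst hρ; omega⟩
        · omega
      · right; omega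

lemma pairwise_lt_newBoxes {T : List (List ℕ)} (hT : IsSSYT T) {w : List ℕ}
    (hw : w.Pairwise (· ≤ ·)) : ((newBoxes T w).map Prod.snd).Pairwise (· < ·) := by
  refine List.IsChain.pairwise ?_
  induction w generalizing T with
  | nil => simp [newBoxes]
  | cons a w ih =>
    obtain ⟨ha, hw⟩ := List.pairwise_cons.mp hw
    rcases w with _ | ⟨b, w⟩
    · simp [newBoxes]
    · simp only [newBoxes, List.map_cons] at ih ⊢
      exact List.isChain_cons_cons.mpr
        ⟨newCol_lt_newCol_insertT hT (ha b (by simp)), ih (hT.insertT a) hw⟩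

lemma isHStrip_insertWord {T : List (List ℕ)} (hT : IsSSYT T) {w : List ℕ}
    (hw : w.Pairwise (· ≤ ·)) : IsHStrip (shape T) (shape (insertWord T w)) := by
  intro j
  refine ⟨?_, part_le_part_insertWord T w j⟩
  by_contra! hlt
  have h₁ := (mem_newBoxes_iff T w (j + 1) (part (shape T) j)).mpr
    ⟨hT.part_antitone (Nat.le_succ j), hlt⟩
  have h₂ := (mem_newBoxes_iff T w j (part (shape T) j)).mpr
    ⟨le_rfl, hlt.trans_le ((hT.insertWord w).part_antitone (Nat.le_succ j))⟩
  have hnodup : ((newBoxes T w).map Prod.snd).Nodup := (pairwise_lt_newBoxes hT hw).imp ne_of_lt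
  simpa using List.inj_on_of_nodup_map hnodup h₁ h₂ rfl

lemma isLeast_newRow_last {T : List (List ℕ)} (hT : IsSSYT T) {w : List ℕ} {y : ℕ}
    (hw : (w ++ [y]).Pairwise (· ≤ ·)) :
    IsLeast {ρ | part (shape T) ρ < part (shape (insertWord T (w ++ [y]))) ρ}
      (newRow (insertWord T w) y) := by
  have hpart := part_insertT (insertWord T w) y
  have hanti := (hT.insertWord (w ++ [y])).part_antitone
  have hcols := pairwise_lt_newBoxes hT hw
  rw [newBoxes_append, List.map_append, List.pairwise_append] at hcols
  have hmono := part_le_part_insertWord T w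
  rw [insertWord_concat] at hanti ⊢
  constructor
  · change (_ : ℕ) < _
    rw [hpart, if_pos rfl]
    have := hmono (newRow (insertWord T w) y)
    omega
  intro ρ hρ
  change (_ : ℕ) < _ at hρ
  -- A row above the last box that grew has a new box to the right of the last box, which
  -- contradicts the antitonicity of the final shape.
  by_contra! hlt
  rw [hpart ρ, if_neg hlt.ne, add_zero] at hρ
  have hbox := (mem_newBoxes_iff T w ρ (part (shape (insertWord T w)) ρ - 1)).mpr
    ⟨by omega, by omega⟩
  have hcol := hcols.2.2 _ (List.mem_map_of_mem hbox) (newCol (insertWord T w) y)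
    (by simp [newBoxes])
  have := hanti hlt.le
  rw [hpart, hpart, if_pos rfl, if_neg hlt.ne] at this
  simp only [newCol] at hcol
  omega

end Words

section PieriWords

theorem insertWord_inj {T₁ T₂ : List (List ℕ)} {w₁ w₂ : List ℕ} (hT₁ : IsSSYT T₁)
    (hT₂ : IsSSYT T₂) (hsh : shape T₁ = shape T₂) (hw₁ : w₁.Pairwise (· ≤ ·))
    (hw₂ : w₂.Pairwise (· ≤ ·)) (hlen : w₁.length = w₂.length)
    (h : insertWord T₁ w₁ = insertWord T₂ w₂) : T₁ = T₂ ∧ w₁ = w₂ := by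
  induction w₁ using List.reverseRecOn generalizing w₂ with
  | nil =>
    obtain rfl : w₂ = [] := List.eq_nil_of_length_eq_zero hlen.symm
    exact ⟨h, rfl⟩
  | append_singleton u₁ y₁ ih =>
    obtain ⟨u₂, y₂, rfl⟩ : ∃ u₂ y₂, w₂ = u₂ ++ [y₂] := by
      have hne : w₂ ≠ [] := List.ne_nil_of_length_pos (by simp at hlen; omega)
      exact ⟨w₂.dropLast, w₂.getLast hne, (List.dropLast_concat_getLast hne).symm⟩
    have hrow : newRow (insertWord T₁ u₁) y₁ = newRow (insertWord T₂ u₂) y₂ :=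
      (isLeast_newRow_last hT₁ hw₁).unique
        (by rw [hsh, h]; exact isLeast_newRow_last hT₂ hw₂)
    have hlast := congrArg (uninsert · (newRow (insertWord T₁ u₁) y₁)) h
    simp only [insertWord_concat] at hlast
    rw [uninsert_insertT (hT₁.insertWord u₁), hrow, uninsert_insertT (hT₂.insertWord u₂),
      Prod.mk.injEq] at hlast
    obtain ⟨hT, hu⟩ := ih (hw₁.sublist (List.sublist_append_left _ _))
      (hw₂.sublist (List.sublist_append_left _ _)) (by simpa using hlen) hlast.1
    exact ⟨hT, by rw [hu, hlast.2]⟩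

lemma le_of_newRow_mem_lowerBounds {T : List (List ℕ)} (hT : IsSSYT T) {w : List ℕ}
    (hw : w.Pairwise (· ≤ ·)) {x : ℕ}
    (hx : newRow (insertWord T w) x ∈
      lowerBounds {ρ | part (shape T) ρ < part (shape (insertWord T w)) ρ}) :
    ∀ a ∈ w, a ≤ x := by
  rcases List.eq_nil_or_concat' w with rfl | ⟨u, y, rfl⟩
  · simp
  intro a ha
  refine le_trans (b := y) ?_ ?_
  · rcases List.mem_append.mp ha with ha | ha
    · exact (List.pairwise_append.mp hw).2.2 a ha y (by simp)
    · simp_all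
  by_contra! hxy
  have hgrow := (isLeast_newRow_last hT hw).1
  have hbump := newCol_insertT_le_newCol (hT.insertWord u) hxy
  have hpart := part_insertT (insertWord T u) y (newRow (insertWord T u) y)
  have hanti := (hT.insertWord (u ++ [y])).part_antitone (hx hgrow)
  rw [insertWord_concat] at hanti
  rw [if_pos rfl] at hpart
  simp only [newCol] at hbump
  omega

theorem exists_insertWord_eq {lam : List ℕ} (hlam : IsShape lam) (l : ℕ) {T' : List (List ℕ)}
    (hT' : IsSSYT T') (hstrip : IsHStrip lam (shape T')) (hsum : (shape T').sum = lam.sum + l) :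
    ∃ T w, IsSSYT T ∧ shape T = lam ∧ w.Pairwise (· ≤ ·) ∧ w.length = l ∧
      insertWord T w = T' := by
  induction l generalizing T' with
  | zero =>
    refine ⟨T', [], hT', ?_, List.Pairwise.nil, rfl, rfl⟩
    exact (eq_of_part_le_of_sum_le hlam.2 hT'.shape_pos (fun i => (hstrip i).2) (by omega)).symm
  | succ l ih =>
    have hex := exists_part_lt_of_sum_lt (s := lam) (t := shape T') (by omega)
    -- The topmost row where `T'` exceeds `lam` ends in a corner, as `shape T' / lam` is a
    -- horizontal strip.
    obtain ⟨hS, hins, hrow⟩ :=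
      uninsert_spec hT' ((hstrip (Nat.find hex)).1.trans_lt (Nat.find_spec hex))
    set T'' := (uninsert T' (Nat.find hex)).1
    set x := (uninsert T' (Nat.find hex)).2
    have hpart (j : ℕ) :
        part (shape T') j = part (shape T'') j + if j = Nat.find hex then 1 else 0 := by
      rw [← hrow, ← part_insertT, hins]
    have hstrip'' := hstrip.of_part_eq_add (Nat.find_spec hex) hpart
    have hsum'' : (shape T'').sum = lam.sum + l := by
      have := sum_addBox (s := shape T'') (i := newRow T'' x)
      rw [← shape_insertT, hins] at this
      omega
    obtain ⟨T, w, hT, hsh, hw, hlen, hTw⟩ := ih hS hstrip'' hsum''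
    have hwx : ∀ a ∈ w, a ≤ x := by
      refine le_of_newRow_mem_lowerBounds hT hw fun ρ hρ => ?_
      change (_ : ℕ) < _ at hρ
      rw [hTw, hrow]
      refine Nat.find_min' hex ?_
      rw [hsh, hTw] at hρ
      have := hpart ρ
      split_ifs at this <;> omega
    refine ⟨T, w ++ [x], hT, hsh, List.pairwise_append.mpr ⟨hw, by simp, by simpa using hwx⟩,
      by simp [hlen], by rw [insertWord_concat, hTw, hins]⟩

end PieriWords

section ContentWord

variable {r : ℕ}

def contentWord (A : Fin r → ℕ) : List ℕ :=
  (List.finRange r).flatMap fun i => List.replicate (A i) (i.val + 1)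

lemma multiInsert_eq_insertWord (T : List (List ℕ)) (A : Fin r → ℕ) :
    multiInsert T A = insertWord T (contentWord A) := rfl

lemma length_contentWord (A : Fin r → ℕ) : (contentWord A).length = ∑ i, A i := by
  simp [contentWord, List.length_flatMap, Fin.sum_univ_def]

lemma pairwise_contentWord (A : Fin r → ℕ) : (contentWord A).Pairwise (· ≤ ·) := by
  refine List.pairwise_flatMap.mpr ⟨fun i _ => List.pairwise_replicate.mpr (.inr le_rfl), ?_⟩
  refine (List.pairwise_lt_finRange r).imp fun {i j} hij a ha b hb => ?_
  rw [List.eq_of_mem_replicate ha, List.eq_of_mem_replicate hb]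
  exact Nat.succ_le_succ (Fin.lt_def.mp hij).le

lemma mem_contentWord {A : Fin r → ℕ} {a : ℕ} (ha : a ∈ contentWord A) :
    1 ≤ a ∧ a ≤ r := by
  obtain ⟨i, -, hi⟩ := List.mem_flatMap.mp ha
  rw [List.eq_of_mem_replicate hi]
  omega

lemma count_contentWord (A : Fin r → ℕ) (i : Fin r) :
    (contentWord A).count (i.val + 1) = A i := by
  simp [contentWord, List.count_flatMap, List.count_replicate, ← Fin.sum_univ_def, Fin.val_inj]

lemma contentWord_count {w : List ℕ} (hw : w.Pairwise (· ≤ ·))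
    (hmem : ∀ a ∈ w, 1 ≤ a ∧ a ≤ r) :
    contentWord (fun i : Fin r => w.count (i.val + 1)) = w := by
  refine List.Perm.eq_of_pairwise' (pairwise_contentWord _) hw
    (List.perm_iff_count.mpr fun a => ?_)
  by_cases ha : 1 ≤ a ∧ a ≤ r
  · have := count_contentWord (fun i : Fin r => w.count (i.val + 1)) ⟨a - 1, by omega⟩
    rwa [Nat.sub_add_cancel ha.1] at this
  · rw [List.count_eq_zero.mpr fun h => ha (mem_contentWord h),
      List.count_eq_zero.mpr fun h => ha (hmem a h)]

lemma contentWord_injective : Function.Injective (contentWord (r := r)) :=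
  fun A₁ A₂ h => funext fun i => by rw [← count_contentWord A₁, h, count_contentWord]

end ContentWord

theorem pieri_bij_general (r l : ℕ) (lam : List ℕ) (hlam : IsShape lam) :
    Set.BijOn (fun p : List (List ℕ) × (Fin r → ℕ) => multiInsert p.1 p.2)
      {p | IsSSYT p.1 ∧ EntriesIn p.1 r ∧ shape p.1 = lam ∧ ∑ i, p.2 i = l}
      {T' | IsSSYT T' ∧ EntriesIn T' r ∧ IsHStrip lam (shape T') ∧
        (shape T').sum = lam.sum + l} := by
  refine ⟨?_, ?_, ?_⟩
  · rintro ⟨T, A⟩ ⟨hT, hE, rfl, rfl⟩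
    refine ⟨hT.insertWord _, entriesIn_insertWord_iff.mpr ⟨hE, fun a => mem_contentWord⟩,
      isHStrip_insertWord hT (pairwise_contentWord A), ?_⟩
    exact (sum_shape_insertWord T (contentWord A)).trans (by rw [length_contentWord])
  · rintro ⟨T₁, A₁⟩ ⟨hT₁, -, hsh₁, hA₁⟩ ⟨T₂, A₂⟩ ⟨hT₂, -, hsh₂, hA₂⟩ h
    obtain ⟨rfl, hw⟩ := insertWord_inj hT₁ hT₂ (hsh₁.trans hsh₂.symm)
      (pairwise_contentWord A₁) (pairwise_contentWord A₂)
      (by simp only [length_contentWord, hA₁, hA₂]) h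
    exact Prod.ext rfl (contentWord_injective hw)
  · rintro T' ⟨hT', hE', hstrip, hsum⟩
    obtain ⟨T, w, hT, rfl, hw, rfl, rfl⟩ := exists_insertWord_eq hlam l hT' hstrip hsum
    obtain ⟨hE, hmem⟩ := entriesIn_insertWord_iff.mp hE'
    refine ⟨(T, fun i => w.count (i.val + 1)), ⟨hT, hE, rfl, ?_⟩, ?_⟩
    · rw [← length_contentWord, contentWord_count hw hmem]
    · simp only [multiInsert_eq_insertWord, contentWord_count hw hmem]

/-- **Pieri rule for tableaux.** For a partition `λ` with at most `r`
parts and `l ∈ ℕ`, the map sending a pair `(T, A)` with `T ∈ SSYT_r(λ)` and `A ∈ ℕ^r`,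
`Σ A_i = l`, to the tableau obtained by row-inserting `1` exactly `A_1` times, then `2`
exactly `A_2` times, ..., then `r` exactly `A_r` times, is a bijection onto
`⊔_μ SSYT_r(μ)`, `μ` ranging over partitions obtained from `λ` by adding `l` boxes,
no two in the same column. -/
theorem pieri_bij (r l : ℕ) (lam : List ℕ) (hlam : IsShape lam)
    (hlen : lam.length ≤ r) :
    Set.BijOn (fun p : List (List ℕ) × (Fin r → ℕ) => multiInsert p.1 p.2)
      {p | IsSSYT p.1 ∧ EntriesIn p.1 r ∧ shape p.1 = lam ∧ ∑ i, p.2 i = l}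
      {T' | IsSSYT T' ∧ EntriesIn T' r ∧ IsHStrip lam (shape T') ∧
        (shape T').sum = lam.sum + l} :=
  pieri_bij_general r l lam hlam

end RSKPaper
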